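/- Let H = J Z^{⊗k} on (ℂ²)^{⊗k} for J > 0. For x ∈ {0,1}^k let |ψ_x⟩ be the computational basis state. Then the function F(x) = ⟨ψ_x| H |ψ_x⟩ = J (−1)^{x₁+⋯+x_k} is k-local but, for any k′ < k, cannot be uniformly approximated by any k′-local function g : {0,1}^k → ℝ to accuracy better than 2^{−k′} J; i.e., max_x |F(x) − g(x)| ≥ 2^{−k′} J for every k′-local g. -/

import Mathlib

/-!
The alternating sum `∑_{s ⊆ [n]} (-1)^|s| f(1_s)` (up to sign, the paper's iterated difference
operator `R` applied `n` times) kills every function that ignores some coordinate, hence every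
`k′`-local function with `k′ < n`, while on the parity `x ↦ (-1)^{x₁+⋯+xₙ}` it equals `2^n`.
Since the sum has `2^n` terms of modulus `|f(1_s)|`, some point has `|F - g| ≥ |J| ≥ 2^{-k′} J`.
-/

/-- A function `f : {0,1}^k → ℝ` is `k′`-local if it is a finite sum of functions
each of which depends on at most `k′` of the input coordinates. -/
def IsKLocal {n : ℕ} (k : ℕ) (f : (Fin n → Bool) → ℝ) : Prop :=
  ∃ (m : ℕ) (g : Fin m → (Fin n → Bool) → ℝ) (S : Fin m → Finset (Fin n)),
    (∀ i, (S i).card ≤ k) ∧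
    (∀ i, ∀ x y : Fin n → Bool, (∀ j ∈ S i, x j = y j) → g i x = g i y) ∧
    (∀ x, f x = ∑ i, g i x)

open Finset

variable {n : ℕ}

theorem isKLocal_self (f : (Fin n → Bool) → ℝ) : IsKLocal n f := by
  refine ⟨1, fun _ => f, fun _ => univ, fun _ => by simp, fun _ x y hxy => ?_, fun x => by simp⟩
  rw [funext fun j => hxy j (mem_univ j)]

noncomputable def parity (x : Fin n → Bool) : ℝ :=
  (-1) ^ #{j | x j = true}

noncomputable def alternatingSum : ((Fin n → Bool) → ℝ) →ₗ[ℝ] ℝ where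
  toFun f := ∑ s ∈ (univ : Finset (Fin n)).powerset, (-1) ^ #s * f (fun j => decide (j ∈ s))
  map_add' f g := by simp only [Pi.add_apply, mul_add, sum_add_distrib]
  map_smul' c f := by simp only [Pi.smul_apply, smul_eq_mul, RingHom.id_apply, mul_sum,
    mul_left_comm]

theorem alternatingSum_apply (f : (Fin n → Bool) → ℝ) :
    alternatingSum f =
      ∑ s ∈ (univ : Finset (Fin n)).powerset, (-1) ^ #s * f (fun j => decide (j ∈ s)) :=
  rfl

theorem alternatingSum_eq_zero_of_dependsOn {f : (Fin n → Bool) → ℝ} {S : Finset (Fin n)}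
    {j₀ : Fin n} (hj₀ : j₀ ∉ S) (hf : DependsOn f S) : alternatingSum f = 0 := by
  rw [alternatingSum_apply, ← insert_erase (mem_univ j₀), sum_powerset_insert (notMem_erase _ _),
    ← sum_add_distrib]
  refine sum_eq_zero fun s hs => ?_
  have hj₀s : j₀ ∉ s := fun h => notMem_erase j₀ _ (mem_powerset.mp hs h)
  have hf_insert : f (fun j => decide (j ∈ insert j₀ s)) = f (fun j => decide (j ∈ s)) :=
    hf fun j hj => by simp [show j ≠ j₀ by rintro rfl; exact hj₀ hj]
  rw [card_insert_of_notMem hj₀s, hf_insert, pow_succ]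
  ring

theorem IsKLocal.alternatingSum_eq_zero {k : ℕ} {g : (Fin n → Bool) → ℝ} (hg : IsKLocal k g)
    (hk : k < n) : alternatingSum g = 0 := by
  obtain ⟨m, gs, S, hcard, hloc, hsum⟩ := hg
  have hg_eq : g = ∑ i, gs i := funext fun x => by simp [hsum]
  rw [hg_eq, map_sum]
  refine sum_eq_zero fun i _ => ?_
  obtain ⟨j₀, hj₀⟩ : (S i)ᶜ.Nonempty := by
    rw [← card_pos, card_compl, Fintype.card_fin]
    have := hcard i
    omega
  exact alternatingSum_eq_zero_of_dependsOn (mem_compl.mp hj₀) fun x y hxy => hloc i x y hxy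

theorem alternatingSum_parity : alternatingSum (parity (n := n)) = 2 ^ n := by
  have hterm : ∀ s : Finset (Fin n), (-1 : ℝ) ^ #s * parity (fun j => decide (j ∈ s)) = 1 := by
    intro s
    simp only [parity, decide_eq_true_eq, filter_mem_eq_inter, univ_inter, ← pow_add, ← two_mul,
      pow_mul, neg_one_sq, one_pow]
  simp [alternatingSum_apply, hterm]

theorem exists_abs_alternatingSum_le (f : (Fin n → Bool) → ℝ) :
    ∃ x, |alternatingSum f| ≤ 2 ^ n * |f x| := by
  obtain ⟨x, hx⟩ := Finite.exists_max fun x => |f x|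
  refine ⟨x, ?_⟩
  calc |alternatingSum f|
      ≤ ∑ s ∈ (univ : Finset (Fin n)).powerset, |(-1) ^ #s * f (fun j => decide (j ∈ s))| :=
        (alternatingSum_apply f).symm ▸ abs_sum_le_sum_abs _ _
    _ ≤ ∑ _s ∈ (univ : Finset (Fin n)).powerset, |f x| :=
        sum_le_sum fun s _ => by simpa using hx _
    _ = 2 ^ n * |f x| := by simp

theorem exists_abs_le_abs_smul_parity_sub {k : ℕ} (J : ℝ) {g : (Fin n → Bool) → ℝ}
    (hg : IsKLocal k g) (hk : k < n) : ∃ x, |J| ≤ |J * parity x - g x| := by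
  obtain ⟨x, hx⟩ := exists_abs_alternatingSum_le (J • parity - g)
  refine ⟨x, le_of_mul_le_mul_left ?_ (pow_pos two_pos n)⟩
  rw [map_sub, map_smul, alternatingSum_parity, hg.alternatingSum_eq_zero hk] at hx
  simpa [abs_mul, mul_comm] using hx

theorem stmt18_general {k k' : ℕ} (J : ℝ) (hkk' : k' < k)
    (F : (Fin k → Bool) → ℝ)
    (hF : ∀ x, F x = J * (-1 : ℝ) ^ ((Finset.univ.filter fun j => x j = true).card)) :
    IsKLocal k F ∧
      ∀ g : (Fin k → Bool) → ℝ, IsKLocal k' g →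
        ∃ x, (2 : ℝ) ^ (-(k' : ℤ)) * J ≤ |F x - g x| := by
  refine ⟨isKLocal_self F, fun g hg => ?_⟩
  obtain ⟨x, hx⟩ := exists_abs_le_abs_smul_parity_sub J hg hkk'
  refine ⟨x, le_trans ?_ (hF x ▸ hx)⟩
  have h2 : (2 : ℝ) ^ (-(k' : ℤ)) ≤ 1 := zpow_le_one_of_nonpos₀ one_le_two (by simp)
  calc (2 : ℝ) ^ (-(k' : ℤ)) * J ≤ (2 : ℝ) ^ (-(k' : ℤ)) * |J| :=
        mul_le_mul_of_nonneg_left (le_abs_self J) (by positivity)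
    _ ≤ |J| := mul_le_of_le_one_left (abs_nonneg J) h2

/-- The diagonal expectation function of `H = J Z^{⊗k}` on computational basis states,
`F(x) = J·(−1)^{x₁+⋯+x_k}`, is `k`-local, but for any `k′ < k` it cannot be uniformly
approximated by any `k′`-local function to accuracy better than `2^{−k′} J`. -/
theorem stmt18 {k k' : ℕ} (J : ℝ) (hJ : 0 < J) (hkk' : k' < k)
    (F : (Fin k → Bool) → ℝ)
    (hF : ∀ x, F x = J * (-1 : ℝ) ^ ((Finset.univ.filter fun j => x j = true).card)) :
    IsKLocal k F ∧
      ∀ g : (Fin k → Bool) → ℝ, IsKLocal k' g →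
        ∃ x, (2 : ℝ) ^ (-(k' : ℤ)) * J ≤ |F x - g x| :=
  stmt18_general J hkk' F hF
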